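/- arXiv:1603.03000 — 6 statements merged into one kernel-verified Lean document; each statement's English description precedes it below -/
import Mathlib

section
/- For each r ≥ 0 and each s > 0 there exists a unique t ∈ (0, M_r⁻¹(s)) such that M_r⁻¹(s) = s / m(t, r). -/
open intervalIntegral

/-- Under (m0)-(m2), for each `r ≥ 0` and each `s > 0` there exists a
unique `t ∈ (0, M_r⁻¹(s))` with `M_r⁻¹(s) = s / m(t,r)`. -/
theorem exists_unique_mean_value_point_pos
    (m : ℝ → ℝ → ℝ) (𝔪 : ℝ) (h𝔪 : 0 < 𝔪)
    (hmcont : Continuous fun p : ℝ × ℝ => m p.1 p.2)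
    (hmpos : ∀ t r, 0 ≤ r → 0 < m t r)
    (hmlb : ∀ t r, 0 ≤ r → 𝔪 ≤ m t r)
    (hmanti : ∀ r, 0 ≤ r → StrictAntiOn (fun t => m t r) (Set.Iio (0:ℝ)))
    (hmmono : ∀ r, 0 ≤ r → StrictMonoOn (fun t => m t r) (Set.Ioi (0:ℝ)))
    (M Minv : ℝ → ℝ → ℝ)
    (hM : ∀ r t, M r t = ∫ s in (0:ℝ)..t, m s r)
    (hinv : ∀ r, 0 ≤ r → Function.LeftInverse (Minv r) (M r) ∧
      Function.RightInverse (Minv r) (M r))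
    (r : ℝ) (hr : 0 ≤ r) (s : ℝ) (hs : 0 < s) :
    ∃! t : ℝ, 0 < t ∧ t < Minv r s ∧ Minv r s = s / m t r := by
  set T := Minv r s with hTdef
  have hc : Continuous fun t => m t r :=
    hmcont.comp (continuous_id.prodMk continuous_const)
  have hMT : M r T = s := (hinv r hr).2 s
  have hsint : s = ∫ x in (0:ℝ)..T, m x r := by rw [← hMT, hM]
  -- T > 0
  have hT : 0 < T := by
    by_contra h
    push_neg at h
    have : (∫ x in (0:ℝ)..T, m x r) ≤ 0 := by
      rw [intervalIntegral.integral_symm]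
      have : 0 ≤ ∫ x in T..(0:ℝ), m x r :=
        intervalIntegral.integral_nonneg h fun x _ => (hmpos x r hr).le
      linarith
    linarith [hsint ▸ this]
  -- m 0 r ≤ m x r for x > 0
  have h0le : ∀ x : ℝ, 0 < x → m 0 r ≤ m x r := by
    intro x hx
    have htend : Filter.Tendsto (fun t => m t r) (nhdsWithin 0 (Set.Ioi 0)) (nhds (m 0 r)) :=
      (hc.continuousAt).continuousWithinAt.tendsto
    refine le_of_tendsto htend ?_
    filter_upwards [Ioo_mem_nhdsGT_of_mem (Set.mem_Ico.mpr ⟨le_refl 0, hx⟩)] with t ht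
    exact ((hmmono r hr) ht.1 hx ht.2).le
  have h0lt : ∀ x : ℝ, 0 < x → m 0 r < m x r := by
    intro x hx
    calc m 0 r ≤ m (x/2) r := h0le _ (by linarith)
    _ < m x r := (hmmono r hr) (by simp; linarith) (by simpa using hx) (by linarith)
  -- strict inequalities for the average
  have hlow : T * m 0 r < s := by
    have := intervalIntegral.integral_lt_integral_of_continuousOn_of_le_of_exists_lt
      (f := fun _ => m 0 r) (g := fun x => m x r) hT
      continuousOn_const hc.continuousOn
      (fun x hx => (h0lt x hx.1).le) ⟨T, Set.right_mem_Icc.mpr hT.le, h0lt T hT⟩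
    simpa [← hsint] using this
  have hhigh : s < T * m T r := by
    have := intervalIntegral.integral_lt_integral_of_continuousOn_of_le_of_exists_lt
      (f := fun x => m x r) (g := fun _ => m T r) hT
      hc.continuousOn continuousOn_const
      (fun x hx => by
        rcases eq_or_lt_of_le hx.2 with h | h
        · exact le_of_eq (by rw [h])
        · exact ((hmmono r hr) hx.1 (by simpa using hT) h).le)
      ⟨0, Set.left_mem_Icc.mpr hT.le, h0lt T hT⟩
    simpa [← hsint] using this
  have havg : s / T ∈ Set.Ioo (m 0 r) (m T r) := by
    constructor
    · rw [lt_div_iff₀ hT]; linarith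
    · rw [div_lt_iff₀ hT]; linarith
  obtain ⟨t, ht, hmt⟩ := intermediate_value_Ioo hT.le hc.continuousOn havg
  have hmtr : m t r = s / T := hmt
  refine ⟨t, ⟨ht.1, ht.2, ?_⟩, ?_⟩
  · rw [hmtr]
    field_simp
  · rintro y ⟨hy1, hy2, hy3⟩
    have hmy : m y r = s / T := by
      have hpos := hmpos y r hr
      have h1 : m y r * T = s := by rw [hy3]; field_simp
      field_simp
      linarith
    exact (hmmono r hr).injOn (Set.mem_Ioi.mpr hy1) (Set.mem_Ioi.mpr ht.1)
      (by rw [hmy, hmtr])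
end

section
/- If s_n → s₀ and r_n → r₀ (with r_n, r₀ ≥ 0), then M_{r_n}⁻¹(s_n) → M_{r₀}⁻¹(s₀); i.e., the map (s,r) ↦ M_r⁻¹(s) is jointly continuous. -/
open intervalIntegral Filter Topology

/-- Under (m0)-(m2), if `s_n → s₀` and `r_n → r₀` (all `r_n, r₀ ≥ 0`),
then `M_{r_n}⁻¹(s_n) → M_{r₀}⁻¹(s₀)`. -/
theorem Minv_joint_sequential_continuity
    (m : ℝ → ℝ → ℝ) (𝔪 : ℝ) (h𝔪 : 0 < 𝔪)
    (hmcont : Continuous fun p : ℝ × ℝ => m p.1 p.2)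
    (hmpos : ∀ t r, 0 ≤ r → 0 < m t r)
    (hmlb : ∀ t r, 0 ≤ r → 𝔪 ≤ m t r)
    (hmanti : ∀ r, 0 ≤ r → StrictAntiOn (fun t => m t r) (Set.Iio (0:ℝ)))
    (hmmono : ∀ r, 0 ≤ r → StrictMonoOn (fun t => m t r) (Set.Ioi (0:ℝ)))
    (M Minv : ℝ → ℝ → ℝ)
    (hM : ∀ r t, M r t = ∫ s in (0:ℝ)..t, m s r)
    (hinv : ∀ r, 0 ≤ r → Function.LeftInverse (Minv r) (M r) ∧
      Function.RightInverse (Minv r) (M r))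
    (rn : ℕ → ℝ) (sn : ℕ → ℝ) (r₀ s₀ : ℝ)
    (hrn : ∀ n, 0 ≤ rn n) (hr₀ : 0 ≤ r₀)
    (hrconv : Tendsto rn atTop (𝓝 r₀))
    (hsconv : Tendsto sn atTop (𝓝 s₀)) :
    Tendsto (fun n => Minv (rn n) (sn n)) atTop (𝓝 (Minv r₀ s₀)) := by
  set t₀ := Minv r₀ s₀ with ht₀
  have hcontr : ∀ r : ℝ, Continuous fun t => m t r := fun r =>
    hmcont.comp (continuous_id.prodMk continuous_const)
  -- key coercivity: 𝔪 * |b - a| ≤ |M r b - M r a|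
  have key : ∀ r, 0 ≤ r → ∀ a b : ℝ, 𝔪 * |b - a| ≤ |M r b - M r a| := by
    have base : ∀ r, 0 ≤ r → ∀ a b : ℝ, a ≤ b → 𝔪 * (b - a) ≤ M r b - M r a := by
      intro r hr a b hab
      have hint : M r b - M r a = ∫ s in a..b, m s r := by
        rw [hM, hM, integral_interval_sub_left ((hcontr r).intervalIntegrable _ _)
          ((hcontr r).intervalIntegrable _ _)]
      rw [hint]
      have : ∫ s in a..b, 𝔪 ≤ ∫ s in a..b, m s r := by
        apply intervalIntegral.integral_mono_on hab intervalIntegrable_const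
          ((hcontr r).intervalIntegrable _ _)
        exact fun x _ => hmlb x r hr
      simpa [mul_comm] using this
    intro r hr a b
    rcases le_total a b with hab | hab
    · have h1 := base r hr a b hab
      have h2 : (0:ℝ) ≤ 𝔪 * (b - a) := mul_nonneg h𝔪.le (sub_nonneg.2 hab)
      have e1 : |b - a| = b - a := abs_of_nonneg (by linarith)
      have e2 : |M r b - M r a| = M r b - M r a := abs_of_nonneg (by linarith)
      rw [e1, e2]; exact h1
    · have h1 := base r hr b a hab
      have h2 : (0:ℝ) ≤ 𝔪 * (a - b) := mul_nonneg h𝔪.le (sub_nonneg.2 hab)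
      have e1 : |b - a| = -(b - a) := abs_of_nonpos (by linarith)
      have e2 : |M r b - M r a| = -(M r b - M r a) := abs_of_nonpos (by linarith)
      rw [e1, e2]; linarith
  -- continuity of r ↦ M r t₀
  have hMlim : Tendsto (fun n => M (rn n) t₀) atTop (𝓝 s₀) := by
    have hc : Continuous fun r => ∫ s in (0:ℝ)..t₀, m s r := by
      apply intervalIntegral.continuous_parametric_intervalIntegral_of_continuous'
        (f := fun r s => m s r)
      exact hmcont.comp (continuous_snd.prodMk continuous_fst)
    have := (hc.continuousAt (x := r₀)).tendsto.comp hrconv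
    have hMr₀ : M r₀ t₀ = s₀ := (hinv r₀ hr₀).2 s₀
    simp only [Function.comp_def] at this
    rw [← hM r₀ t₀, hMr₀] at this
    simpa only [← hM] using this
  -- squeeze
  have hbound : ∀ n, dist (Minv (rn n) (sn n)) t₀ ≤ |sn n - M (rn n) t₀| / 𝔪 := by
    intro n
    have h1 := key (rn n) (hrn n) t₀ (Minv (rn n) (sn n))
    rw [(hinv (rn n) (hrn n)).2 (sn n)] at h1
    rw [Real.dist_eq, le_div_iff₀ h𝔪, mul_comm]
    exact h1
  have hzero : Tendsto (fun n => |sn n - M (rn n) t₀| / 𝔪) atTop (𝓝 0) := by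
    have : Tendsto (fun n => |sn n - M (rn n) t₀|) atTop (𝓝 |s₀ - s₀|) :=
      (hsconv.sub hMlim).abs
    simpa using this.div_const 𝔪
  rw [tendsto_iff_dist_tendsto_zero]
  exact squeeze_zero (fun n => dist_nonneg) hbound hzero
end

section
/- For each fixed r ≥ 0, the map s ↦ M_r⁻¹(s)/s is strictly decreasing on (0,∞) and strictly increasing on (−∞,0). -/
open intervalIntegral

/-- Under (m0)-(m2), for each `r ≥ 0` the map `s ↦ M_r⁻¹(s)/s` is
strictly decreasing on `(0,∞)` and strictly increasing on `(−∞,0)`. -/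
theorem Minv_div_monotone
    (m : ℝ → ℝ → ℝ) (𝔪 : ℝ) (h𝔪 : 0 < 𝔪)
    (hmcont : Continuous fun p : ℝ × ℝ => m p.1 p.2)
    (hmpos : ∀ t r, 0 ≤ r → 0 < m t r)
    (hmlb : ∀ t r, 0 ≤ r → 𝔪 ≤ m t r)
    (hmanti : ∀ r, 0 ≤ r → StrictAntiOn (fun t => m t r) (Set.Iio (0:ℝ)))
    (hmmono : ∀ r, 0 ≤ r → StrictMonoOn (fun t => m t r) (Set.Ioi (0:ℝ)))
    (M Minv : ℝ → ℝ → ℝ)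
    (hM : ∀ r t, M r t = ∫ s in (0:ℝ)..t, m s r)
    (hinv : ∀ r, 0 ≤ r → Function.LeftInverse (Minv r) (M r) ∧
      Function.RightInverse (Minv r) (M r))
    (r : ℝ) (hr : 0 ≤ r) :
    StrictAntiOn (fun s => Minv r s / s) (Set.Ioi (0:ℝ)) ∧
    StrictMonoOn (fun s => Minv r s / s) (Set.Iio (0:ℝ)) := by
  -- continuity of `m · r`
  have hmc : Continuous fun t => m t r :=
    hmcont.comp (continuous_id.prodMk continuous_const)
  have hii : ∀ a b : ℝ, IntervalIntegrable (fun s => m s r) MeasureTheory.volume a b :=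
    fun a b => hmc.intervalIntegrable a b
  -- M difference formula
  have hMd : ∀ a b : ℝ, M r b - M r a = ∫ s in a..b, m s r := by
    intro a b
    rw [hM, hM]
    exact integral_interval_sub_left (hii 0 b) (hii 0 a)
  have hM0 : M r 0 = 0 := by rw [hM]; simp
  -- strict monotonicity of M r
  have hMmono : StrictMono (M r) := by
    intro a b hab
    have h := intervalIntegral_pos_of_pos_on (hii a b)
      (fun x _ => hmpos x r hr) hab
    have := hMd a b
    linarith
  -- boundary limit lemmas
  have lim_pos : ∀ t : ℝ, 0 < t → m 0 r ≤ m t r := by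
    intro t ht
    have hcl : (0:ℝ) ∈ closure (Set.Ioo 0 t) := by
      rw [closure_Ioo (ne_of_lt ht)]
      exact Set.left_mem_Icc.2 ht.le
    haveI : (nhdsWithin (0:ℝ) (Set.Ioo 0 t)).NeBot :=
      mem_closure_iff_nhdsWithin_neBot.mp hcl
    have htend : Filter.Tendsto (fun s => m s r) (nhdsWithin 0 (Set.Ioo 0 t)) (nhds (m 0 r)) :=
      (hmc.continuousAt).tendsto.mono_left nhdsWithin_le_nhds
    refine le_of_tendsto htend ?_
    filter_upwards [eventually_mem_nhdsWithin] with x hx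
    exact (hmmono r hr hx.1 (Set.mem_Ioi.2 ht) hx.2).le
  have lim_neg : ∀ t : ℝ, t < 0 → m 0 r ≤ m t r := by
    intro t ht
    have hcl : (0:ℝ) ∈ closure (Set.Ioo t 0) := by
      rw [closure_Ioo (ne_of_lt ht)]
      exact Set.right_mem_Icc.2 ht.le
    haveI : (nhdsWithin (0:ℝ) (Set.Ioo t 0)).NeBot :=
      mem_closure_iff_nhdsWithin_neBot.mp hcl
    have htend : Filter.Tendsto (fun s => m s r) (nhdsWithin 0 (Set.Ioo t 0)) (nhds (m 0 r)) :=
      (hmc.continuousAt).tendsto.mono_left nhdsWithin_le_nhds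
    refine le_of_tendsto htend ?_
    filter_upwards [eventually_mem_nhdsWithin] with x hx
    exact (hmanti r hr (Set.mem_Iio.2 ht) hx.2 hx.1).le
  -- pointwise bounds on closed intervals
  have hle_pos : ∀ t : ℝ, 0 < t → ∀ x ∈ Set.Icc (0:ℝ) t, m x r ≤ m t r := by
    intro t ht x hx
    rcases hx.1.eq_or_lt with h0 | h0
    · rw [← h0]; exact lim_pos t ht
    · rcases hx.2.eq_or_lt with h1 | h1
      · rw [h1]
      · exact (hmmono r hr (Set.mem_Ioi.2 h0) (Set.mem_Ioi.2 ht) h1).le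
  have hle_neg : ∀ t : ℝ, t < 0 → ∀ x ∈ Set.Icc t (0:ℝ), m x r ≤ m t r := by
    intro t ht x hx
    rcases hx.2.eq_or_lt with h0 | h0
    · rw [h0]; exact lim_neg t ht
    · rcases hx.1.eq_or_lt with h1 | h1
      · rw [← h1]
      · exact (hmanti r hr (Set.mem_Iio.2 ht) (Set.mem_Iio.2 h0) h1).le
  -- key inequality, positive side
  have key_pos : ∀ t1 t2 : ℝ, 0 < t1 → t1 < t2 → t2 * M r t1 < t1 * M r t2 := by
    intro t1 t2 ht1 h12
    have A : M r t1 ≤ t1 * m t1 r := by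
      have : (∫ s in (0:ℝ)..t1, m s r) ≤ ∫ _s in (0:ℝ)..t1, m t1 r :=
        integral_mono_on ht1.le (hii 0 t1) (intervalIntegrable_const) (hle_pos t1 ht1)
      rw [intervalIntegral.integral_const] at this
      rw [hM]
      simpa using this
    have B : (t2 - t1) * m t1 r < ∫ s in t1..t2, m s r := by
      have hpos : 0 < ∫ s in t1..t2, (m s r - m t1 r) := by
        refine intervalIntegral_pos_of_pos_on ((hii t1 t2).sub intervalIntegrable_const)
          (fun x hx => ?_) h12
        have := hmmono r hr (Set.mem_Ioi.2 ht1) (Set.mem_Ioi.2 (ht1.trans hx.1)) hx.1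
        simpa using this
      rw [intervalIntegral.integral_sub (hii t1 t2) intervalIntegrable_const,
        intervalIntegral.integral_const] at hpos
      have : (t2 - t1) • m t1 r = (t2 - t1) * m t1 r := rfl
      linarith [hpos]
    have C : M r t2 = M r t1 + ∫ s in t1..t2, m s r := by
      have := hMd t1 t2; linarith
    have D : (t2 - t1) * M r t1 ≤ (t2 - t1) * (t1 * m t1 r) :=
      mul_le_mul_of_nonneg_left A (by linarith)
    have E : t1 * ((t2 - t1) * m t1 r) < t1 * (∫ s in t1..t2, m s r) :=
      mul_lt_mul_of_pos_left B ht1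
    nlinarith [D, E, C]
  -- key inequality, negative side
  have key_neg : ∀ t1 t2 : ℝ, t1 < t2 → t2 < 0 → t1 * M r t2 < t2 * M r t1 := by
    intro t1 t2 h12 ht2
    have A : t2 * m t2 r ≤ M r t2 := by
      have : (∫ s in t2..(0:ℝ), m s r) ≤ ∫ _s in t2..(0:ℝ), m t2 r :=
        integral_mono_on ht2.le (hii t2 0) (intervalIntegrable_const) (hle_neg t2 ht2)
      rw [intervalIntegral.integral_const] at this
      have hD := hMd t2 0
      rw [hM0] at hD
      have hs : (0 - t2) • m t2 r = (0 - t2) * m t2 r := rfl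
      linarith
    have B : (t2 - t1) * m t2 r < ∫ s in t1..t2, m s r := by
      have hpos : 0 < ∫ s in t1..t2, (m s r - m t2 r) := by
        refine intervalIntegral_pos_of_pos_on ((hii t1 t2).sub intervalIntegrable_const)
          (fun x hx => ?_) h12
        have := hmanti r hr (Set.mem_Iio.2 (hx.2.trans ht2)) (Set.mem_Iio.2 ht2) hx.2
        simpa using this
      rw [intervalIntegral.integral_sub (hii t1 t2) intervalIntegrable_const,
        intervalIntegral.integral_const] at hpos
      have : (t2 - t1) • m t2 r = (t2 - t1) * m t2 r := rfl
      linarith [hpos]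
    have C : M r t1 = M r t2 - ∫ s in t1..t2, m s r := by
      have := hMd t1 t2; linarith
    have D : (t2 - t1) * (t2 * m t2 r) ≤ (t2 - t1) * M r t2 :=
      mul_le_mul_of_nonneg_left A (by linarith)
    have E : (-t2) * ((t2 - t1) * m t2 r) < (-t2) * (∫ s in t1..t2, m s r) :=
      mul_lt_mul_of_pos_left B (by linarith)
    nlinarith [D, E, C]
  constructor
  · -- strictly decreasing on (0, ∞)
    intro s1 hs1 s2 hs2 hlt
    have hs1' : (0:ℝ) < s1 := hs1
    have hs2' : (0:ℝ) < s2 := hs2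
    have h1 : M r (Minv r s1) = s1 := (hinv r hr).2 s1
    have h2 : M r (Minv r s2) = s2 := (hinv r hr).2 s2
    have ht1 : 0 < Minv r s1 := by
      by_contra h
      push_neg at h
      have := hMmono.monotone h
      rw [h1, hM0] at this
      linarith
    have ht12 : Minv r s1 < Minv r s2 := by
      apply hMmono.lt_iff_lt.mp
      rw [h1, h2]; exact hlt
    have key := key_pos (Minv r s1) (Minv r s2) ht1 ht12
    rw [h1, h2] at key
    simp only
    rw [div_lt_div_iff₀ hs2' hs1']
    linarith
  · -- strictly increasing on (-∞, 0)
    intro s1 hs1 s2 hs2 hlt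
    have hs1' : s1 < 0 := hs1
    have hs2' : s2 < 0 := hs2
    have h1 : M r (Minv r s1) = s1 := (hinv r hr).2 s1
    have h2 : M r (Minv r s2) = s2 := (hinv r hr).2 s2
    have ht2 : Minv r s2 < 0 := by
      by_contra h
      push_neg at h
      have := hMmono.monotone h
      rw [h2, hM0] at this
      linarith
    have ht12 : Minv r s1 < Minv r s2 := by
      apply hMmono.lt_iff_lt.mp
      rw [h1, h2]; exact hlt
    have key := key_neg (Minv r s1) (Minv r s2) ht12 ht2
    rw [h1, h2] at key
    simp only
    rw [show Minv r s1 / s1 = -(Minv r s1) / -s1 by rw [neg_div_neg_eq],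
        show Minv r s2 / s2 = -(Minv r s2) / -s2 by rw [neg_div_neg_eq],
        div_lt_div_iff₀ (by linarith : (0:ℝ) < -s1) (by linarith : (0:ℝ) < -s2)]
    nlinarith [key]
end

section
/- If m satisfies (m0)–(m2), f : Ω × ℝ → ℝ satisfies the monotonicity condition that t ↦ f(x,t)/t is strictly decreasing on (0,∞) for a.e. x, and f ≥ 0, then for every r ≥ 0 the transformed nonlinearity h_r(x,t) = f(x, M_r⁻¹(t)) also satisfies that t ↦ h_r(x,t)/t is strictly decreasing on (0,∞) for a.e. x. -/
open intervalIntegral MeasureTheory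

/-- If `m` satisfies (m0)-(m2), `f ≥ 0` and for a.e. `x` the map
`t ↦ f(x,t)/t` is strictly decreasing on `(0,∞)`, then for every `r ≥ 0` the
transformed nonlinearity `h_r(x,t) = f(x, M_r⁻¹(t))` has the same property. -/
theorem transformed_nonlinearity_div_strictAnti
    {Ω : Type*} [MeasureSpace Ω]
    (m : ℝ → ℝ → ℝ) (𝔪 : ℝ) (h𝔪 : 0 < 𝔪)
    (hmcont : Continuous fun p : ℝ × ℝ => m p.1 p.2)
    (hmpos : ∀ t r, 0 ≤ r → 0 < m t r)
    (hmlb : ∀ t r, 0 ≤ r → 𝔪 ≤ m t r)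
    (hmanti : ∀ r, 0 ≤ r → StrictAntiOn (fun t => m t r) (Set.Iio (0:ℝ)))
    (hmmono : ∀ r, 0 ≤ r → StrictMonoOn (fun t => m t r) (Set.Ioi (0:ℝ)))
    (M Minv : ℝ → ℝ → ℝ)
    (hM : ∀ r t, M r t = ∫ s in (0:ℝ)..t, m s r)
    (hinv : ∀ r, 0 ≤ r → Function.LeftInverse (Minv r) (M r) ∧
      Function.RightInverse (Minv r) (M r))
    (f : Ω → ℝ → ℝ)
    (hfnonneg : ∀ x t, 0 ≤ f x t)
    (hfanti : ∀ᵐ x : Ω, StrictAntiOn (fun t => f x t / t) (Set.Ioi (0:ℝ))) :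
    ∀ r, 0 ≤ r →
      ∀ᵐ x : Ω, StrictAntiOn (fun t => f x (Minv r t) / t) (Set.Ioi (0:ℝ)) := by
  intro r hr
  have hmc : Continuous fun s => m s r :=
    hmcont.comp (continuous_id.prodMk continuous_const)
  -- M r is strictly monotone
  have hMmono : StrictMono (M r) := by
    intro s t hst
    have hii : IntervalIntegrable (fun s => m s r) MeasureTheory.volume s t :=
      hmc.intervalIntegrable s t
    have hpos : (0:ℝ) < ∫ x in s..t, m x r :=
      intervalIntegral.intervalIntegral_pos_of_pos_on hii
        (fun x _ => hmpos x r hr) hst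
    have hsplit : M r s + ∫ x in s..t, m x r = M r t := by
      rw [hM, hM]
      exact intervalIntegral.integral_add_adjacent_intervals
        (hmc.intervalIntegrable 0 s) (hmc.intervalIntegrable s t)
    linarith
  have hM0 : M r 0 = 0 := by rw [hM]; simp
  filter_upwards [hfanti] with x hx
  intro a ha b hb hab
  simp only [Set.mem_Ioi] at ha hb
  set u := Minv r a with hu
  set v := Minv r b with hv
  have hMu : M r u = a := (hinv r hr).2 a
  have hMv : M r v = b := (hinv r hr).2 b
  have hupos : 0 < u := by
    by_contra h
    push_neg at h
    have := hMmono.le_iff_le.mpr h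
    rw [hMu, hM0] at this
    linarith
  have huv : u < v := by
    have : M r u < M r v := by rw [hMu, hMv]; exact hab
    exact hMmono.lt_iff_lt.mp this
  have hvpos : 0 < v := lt_trans hupos huv
  -- M r u ≤ u * m u r
  have h1 : M r u ≤ u * m u r := by
    rw [hM, intervalIntegral.integral_of_le hupos.le]
    have hint : MeasureTheory.IntegrableOn (fun s => m s r) (Set.Ioc 0 u) :=
      (hmc.intervalIntegrable 0 u).1
    have hconst : MeasureTheory.IntegrableOn (fun _ : ℝ => m u r) (Set.Ioc 0 u) :=
      MeasureTheory.integrableOn_const (by simp [Real.volume_Ioc])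
    have := MeasureTheory.setIntegral_mono_on hint hconst measurableSet_Ioc
      (fun s hs => by
        rcases eq_or_lt_of_le hs.2 with h | h
        · exact le_of_eq (by rw [h])
        · exact (hmmono r hr hs.1 hupos h).le)
    calc ∫ s in Set.Ioc 0 u, m s r ≤ ∫ _ in Set.Ioc 0 u, m u r := this
      _ = u * m u r := by
          simp [Real.volume_Ioc, hupos.le]
  -- (v - u) * m u r ≤ M r v - M r u
  have h2 : (v - u) * m u r ≤ M r v - M r u := by
    have hsplit : M r u + ∫ x in u..v, m x r = M r v := by
      rw [hM, hM]
      exact intervalIntegral.integral_add_adjacent_intervals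
        (hmc.intervalIntegrable 0 u) (hmc.intervalIntegrable u v)
    have hle : (v - u) * m u r ≤ ∫ x in u..v, m x r := by
      rw [intervalIntegral.integral_of_le huv.le]
      have hint : MeasureTheory.IntegrableOn (fun s => m s r) (Set.Ioc u v) :=
        (hmc.intervalIntegrable u v).1
      have hconst : MeasureTheory.IntegrableOn (fun _ : ℝ => m u r) (Set.Ioc u v) :=
        MeasureTheory.integrableOn_const (by simp [Real.volume_Ioc])
      have := MeasureTheory.setIntegral_mono_on hconst hint measurableSet_Ioc
        (fun s hs => (hmmono r hr hupos (lt_trans hupos hs.1) hs.1).le)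
      calc (v - u) * m u r = ∫ _ in Set.Ioc u v, m u r := by
            simp [Real.volume_Ioc, huv.le, mul_comm]
        _ ≤ ∫ s in Set.Ioc u v, m s r := this
    linarith
  have hmu_pos : 0 < m u r := hmpos u r hr
  -- ratio inequality : M r u * v ≤ M r v * u
  have hratio : M r u * v ≤ M r v * u := by nlinarith
  -- main inequality
  have hfx : f x v / v < f x u / u := hx hupos hvpos huv
  have hfu : 0 ≤ f x u := hfnonneg x u
  have hfv : 0 ≤ f x v := hfnonneg x v
  have hMupos : 0 < M r u := by rw [hMu]; exact ha
  have hMvpos : 0 < M r v := by rw [hMv]; exact hb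
  show f x v / b < f x u / a
  rw [← hMu, ← hMv, div_lt_div_iff₀ hMvpos hMupos]
  have hkey : f x v * u < f x u * v := by
    have := (div_lt_div_iff₀ hvpos hupos).mp hfx
    linarith
  nlinarith [mul_le_mul_of_nonneg_left hratio hfv,
    mul_lt_mul_of_pos_right hkey hMvpos]
end

section
/- If m is continuous with m ≥ 𝔪 > 0 and, for each fixed r, strictly monotone away from 0 as in (m2), and if r_n → r₀, v ∈ L²(Ω) fixed, then the sequence u_n = M_{r_n}⁻¹ ∘ v converges pointwise a.e. to M_{r₀}⁻¹ ∘ v, and ∫_Ω |∇u_n|² dx → ∫_Ω |∇u_{r₀}|² dx where ∇u_n = ∇v / m_{r_n}(u_n), by dominated convergence with dominating function 𝔪⁻²|∇v|². -/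
open intervalIntegral MeasureTheory Filter Topology

/-- If `r_n → r₀` (all nonnegative) and `v` is fixed, then
`u_n = M_{r_n}⁻¹ ∘ v → M_{r₀}⁻¹ ∘ v` pointwise a.e., and
`∫ |∇u_n|² → ∫ |∇u_{r₀}|²` where `∇u_n = ∇v / m_{r_n}(u_n)`, by dominated
convergence with dominating function `𝔪⁻²|∇v|²`. -/
theorem convergence_of_gradients
    {Ω : Type*} [MeasureSpace Ω]
    {E : Type*} [NormedAddCommGroup E] [InnerProductSpace ℝ E] [MeasurableSpace E] [BorelSpace E]
    (m : ℝ → ℝ → ℝ) (𝔪 : ℝ) (h𝔪 : 0 < 𝔪)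
    (hmcont : Continuous fun p : ℝ × ℝ => m p.1 p.2)
    (hmpos : ∀ t r, 0 ≤ r → 0 < m t r)
    (hmlb : ∀ t r, 0 ≤ r → 𝔪 ≤ m t r)
    (hmanti : ∀ r, 0 ≤ r → StrictAntiOn (fun t => m t r) (Set.Iio (0:ℝ)))
    (hmmono : ∀ r, 0 ≤ r → StrictMonoOn (fun t => m t r) (Set.Ioi (0:ℝ)))
    (M Minv : ℝ → ℝ → ℝ)
    (hM : ∀ r t, M r t = ∫ s in (0:ℝ)..t, m s r)
    (hinv : ∀ r, 0 ≤ r → Function.LeftInverse (Minv r) (M r) ∧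
      Function.RightInverse (Minv r) (M r))
    (v : Ω → ℝ) (hvmeas : Measurable v)
    (gradv : Ω → E) (hgradmeas : Measurable gradv)
    (hgradint : Integrable (fun x => ‖gradv x‖ ^ 2))
    (rn : ℕ → ℝ) (r₀ : ℝ) (hrn : ∀ n, 0 ≤ rn n) (hr₀ : 0 ≤ r₀)
    (hrconv : Tendsto rn atTop (𝓝 r₀)) :
    (∀ᵐ x : Ω, Tendsto (fun n => Minv (rn n) (v x)) atTop (𝓝 (Minv r₀ (v x)))) ∧
    Tendsto
      (fun n => ∫ x : Ω, ‖(m (Minv (rn n) (v x)) (rn n))⁻¹ • gradv x‖ ^ 2)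
      atTop
      (𝓝 (∫ x : Ω, ‖(m (Minv r₀ (v x)) r₀)⁻¹ • gradv x‖ ^ 2)) := by
  -- continuity of m in the first variable
  have hmc1 : ∀ r : ℝ, Continuous fun t => m t r := fun r =>
    hmcont.comp (continuous_id.prodMk continuous_const)
  have hint : ∀ r a b : ℝ, IntervalIntegrable (fun s => m s r) volume a b :=
    fun r a b => (hmc1 r).intervalIntegrable a b
  -- lower bound on integrals of m
  have hlb : ∀ r a b : ℝ, 0 ≤ r → a ≤ b → 𝔪 * (b - a) ≤ ∫ s in a..b, m s r := by
    intro r a b hr hab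
    have h := intervalIntegral.integral_mono_on (μ := volume) hab
      (_root_.intervalIntegrable_const (c := 𝔪)) (hint r a b)
      (fun s _ => hmlb s r hr)
    simpa [intervalIntegral.integral_const, mul_comm] using h
  -- M r is strictly monotone
  have hMmono : ∀ r : ℝ, 0 ≤ r → StrictMono (M r) := by
    intro r hr a b hab
    have key : M r b - M r a = ∫ s in a..b, m s r := by
      rw [hM, hM]
      exact intervalIntegral.integral_interval_sub_left (hint r 0 b) (hint r 0 a)
    have hpos : 0 < 𝔪 * (b - a) := by
      have : 0 < b - a := sub_pos.mpr hab
      positivity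
    have := hlb r a b hr hab.le
    linarith
  have hMr : ∀ r y, 0 ≤ r → M r (Minv r y) = y := fun r y hr => (hinv r hr).2 y
  -- continuity of r ↦ M r c
  have hMcontr : ∀ c : ℝ, Continuous fun r => M r c := by
    intro c
    have h : Continuous fun r : ℝ => ∫ s in (0:ℝ)..c, m s r := by
      apply intervalIntegral.continuous_parametric_intervalIntegral_of_continuous
        (f := fun (r : ℝ) (s : ℝ) => m s r) (μ := volume) (s := fun _ : ℝ => c)
      · exact hmcont.comp (continuous_snd.prodMk continuous_fst)
      · exact continuous_const
    have he : (fun r => M r c) = fun r : ℝ => ∫ s in (0:ℝ)..c, m s r := by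
      funext r; exact hM r c
    rw [he]; exact h
  -- key pointwise convergence
  have hkey : ∀ y : ℝ, Tendsto (fun n => Minv (rn n) y) atTop (𝓝 (Minv r₀ y)) := by
    intro y
    rw [tendsto_order]
    constructor
    · intro b hb
      have h1 : M r₀ b < y := by
        have := hMmono r₀ hr₀ hb
        rwa [hMr r₀ y hr₀] at this
      have hev : ∀ᶠ n in atTop, M (rn n) b < y :=
        hrconv.eventually ((isOpen_lt (hMcontr b) continuous_const).mem_nhds h1)
      filter_upwards [hev] with n hn
      by_contra hle
      push_neg at hle
      have h2 : M (rn n) (Minv (rn n) y) ≤ M (rn n) b :=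
        (hMmono (rn n) (hrn n)).monotone hle
      rw [hMr (rn n) y (hrn n)] at h2
      linarith
    · intro b hb
      have h1 : y < M r₀ b := by
        have := hMmono r₀ hr₀ hb
        rwa [hMr r₀ y hr₀] at this
      have hev : ∀ᶠ n in atTop, y < M (rn n) b :=
        hrconv.eventually ((isOpen_lt continuous_const (hMcontr b)).mem_nhds h1)
      filter_upwards [hev] with n hn
      by_contra hle
      push_neg at hle
      have h2 : M (rn n) b ≤ M (rn n) (Minv (rn n) y) :=
        (hMmono (rn n) (hrn n)).monotone hle
      rw [hMr (rn n) y (hrn n)] at h2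
      linarith
  refine ⟨Eventually.of_forall fun x => hkey (v x), ?_⟩
  -- monotonicity (hence measurability) of Minv r
  have hMinvmono : ∀ r, 0 ≤ r → Monotone (Minv r) := by
    intro r hr y1 y2 h
    rw [← (hMmono r hr).le_iff_le, hMr r y1 hr, hMr r y2 hr]
    exact h
  -- dominated convergence
  apply MeasureTheory.tendsto_integral_of_dominated_convergence
    (fun x => 𝔪⁻¹ ^ 2 * ‖gradv x‖ ^ 2)
  · intro n
    have meas1 : Measurable fun x => Minv (rn n) (v x) :=
      ((hMinvmono (rn n) (hrn n)).measurable).comp hvmeas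
    have meas2 : Measurable fun x => m (Minv (rn n) (v x)) (rn n) :=
      ((hmc1 (rn n)).measurable).comp meas1
    have he : (fun x => ‖(m (Minv (rn n) (v x)) (rn n))⁻¹ • gradv x‖ ^ 2)
        = fun x => ((m (Minv (rn n) (v x)) (rn n))⁻¹) ^ 2 * ‖gradv x‖ ^ 2 := by
      funext x
      rw [norm_smul, Real.norm_eq_abs,
        abs_of_pos (inv_pos.mpr (hmpos _ _ (hrn n))), mul_pow]
    rw [he]
    exact ((meas2.inv.pow_const 2).mul (hgradmeas.norm.pow_const 2)).aestronglyMeasurable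
  · exact hgradint.const_mul _
  · intro n
    refine Eventually.of_forall fun x => ?_
    have hmx := hmpos (Minv (rn n) (v x)) (rn n) (hrn n)
    have hmlx := hmlb (Minv (rn n) (v x)) (rn n) (hrn n)
    have hinvle : (m (Minv (rn n) (v x)) (rn n))⁻¹ ≤ 𝔪⁻¹ :=
      inv_anti₀ h𝔪 hmlx
    have hinvpos : 0 < (m (Minv (rn n) (v x)) (rn n))⁻¹ := inv_pos.mpr hmx
    rw [Real.norm_eq_abs, abs_of_nonneg (by positivity), norm_smul, Real.norm_eq_abs,
      abs_of_pos hinvpos, mul_pow]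
    gcongr
  · refine Eventually.of_forall fun x => ?_
    have tendm : Tendsto (fun n => m (Minv (rn n) (v x)) (rn n)) atTop
        (𝓝 (m (Minv r₀ (v x)) r₀)) := by
      have h := (hkey (v x)).prodMk_nhds hrconv
      exact (hmcont.tendsto _).comp h
    have hne : m (Minv r₀ (v x)) r₀ ≠ 0 := (hmpos _ _ hr₀).ne'
    exact ((tendm.inv₀ hne).smul_const (gradv x)).norm.pow 2
end

section
/- For each r ≥ 0 and s < 0, there exists a unique t with M_r⁻¹(s) < t < 0 such that s = M_r(s / m(t,r)), and |t| < |M_r⁻¹(s)| ≤ 𝔪⁻¹|s|. -/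
open intervalIntegral

/-- For `r ≥ 0` and `s < 0`, there is a unique `t` with
`M_r⁻¹(s) < t < 0` and `s = M_r(s / m(t,r))`, and moreover
`|t| < |M_r⁻¹(s)| ≤ 𝔪⁻¹ |s|`. -/
theorem exists_unique_mean_value_point_neg
    (m : ℝ → ℝ → ℝ) (𝔪 : ℝ) (h𝔪 : 0 < 𝔪)
    (hmcont : Continuous fun p : ℝ × ℝ => m p.1 p.2)
    (hmpos : ∀ t r, 0 ≤ r → 0 < m t r)
    (hmlb : ∀ t r, 0 ≤ r → 𝔪 ≤ m t r)
    (hmanti : ∀ r, 0 ≤ r → StrictAntiOn (fun t => m t r) (Set.Iio (0:ℝ)))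
    (hmmono : ∀ r, 0 ≤ r → StrictMonoOn (fun t => m t r) (Set.Ioi (0:ℝ)))
    (M Minv : ℝ → ℝ → ℝ)
    (hM : ∀ r t, M r t = ∫ s in (0:ℝ)..t, m s r)
    (hinv : ∀ r, 0 ≤ r → Function.LeftInverse (Minv r) (M r) ∧
      Function.RightInverse (Minv r) (M r))
    (r : ℝ) (hr : 0 ≤ r) (s : ℝ) (hs : s < 0) :
    (∃! t : ℝ, Minv r s < t ∧ t < 0 ∧ s = M r (s / m t r) ∧
      |t| < |Minv r s| ∧ |Minv r s| ≤ 𝔪⁻¹ * |s|) := by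
  have hc : Continuous fun t => m t r := hmcont.comp (continuous_id.prodMk continuous_const)
  have hint : ∀ a b : ℝ, IntervalIntegrable (fun t => m t r) MeasureTheory.volume a b :=
    fun a b => hc.intervalIntegrable a b
  have hM0 : M r 0 = 0 := by rw [hM]; simp
  have hMmono : StrictMono (M r) := by
    intro a b hab
    have h1 : M r a + (∫ x in a..b, m x r) = M r b := by
      rw [hM, hM, intervalIntegral.integral_add_adjacent_intervals (hint 0 a) (hint a b)]
    have h2 : 0 < ∫ x in a..b, m x r :=
      intervalIntegral.intervalIntegral_pos_of_pos (hint a b) (fun x => hmpos x r hr) hab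
    linarith
  set u := Minv r s with hu
  have hMu : M r u = s := (hinv r hr).2 s
  have hu0 : u < 0 := by
    have := hMmono.lt_iff_lt (a := u) (b := 0)
    rw [hMu, hM0] at this
    exact this.mp hs
  -- m 0 r < m x r for x < 0
  have hanti0 : ∀ x : ℝ, x < 0 → m 0 r < m x r := by
    intro x hx
    have hx2 : x / 2 < 0 := by linarith
    have h1 : m (x / 2) r < m x r := hmanti r hr hx hx2 (by linarith)
    have h2 : m 0 r ≤ m (x / 2) r := by
      have htend : Filter.Tendsto (fun y => m y r) (nhdsWithin 0 (Set.Iio 0)) (nhds (m 0 r)) :=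
        (hc.tendsto 0).mono_left nhdsWithin_le_nhds
      refine le_of_tendsto htend ?_
      filter_upwards [Ioo_mem_nhdsLT_of_mem
        (show (0:ℝ) ∈ Set.Ioc (x / 2) 0 from ⟨by linarith, le_refl 0⟩)] with y hy
      exact (hmanti r hr hx2 hy.2 hy.1).le
    linarith
  have hIs : (∫ x in u..0, m x r) = -s := by
    rw [intervalIntegral.integral_symm, ← hM r u, hMu]
  -- bound |u| ≤ 𝔪⁻¹ |s|
  have hlb : 𝔪 * (-u) ≤ -s := by
    have : (∫ x in u..0, (𝔪 : ℝ)) ≤ ∫ x in u..0, m x r := by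
      refine intervalIntegral.integral_mono_on hu0.le
        (intervalIntegrable_const) (hint u 0) ?_
      intro x hx
      exact hmlb x r hr
    rw [hIs, intervalIntegral.integral_const, smul_eq_mul] at this
    have e : (0 - u) * 𝔪 = 𝔪 * -u := by ring
    rw [e] at this
    exact this
  have habs : |u| ≤ 𝔪⁻¹ * |s| := by
    rw [abs_of_neg hu0, abs_of_neg hs]
    nlinarith [mul_le_mul_of_nonneg_left hlb (inv_pos.2 h𝔪).le,
      mul_inv_cancel₀ h𝔪.ne']
  -- strict bounds for the mean value  c = s / u
  have hupos : 0 < -u := by linarith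
  have hlow : m 0 r * (-u) < -s := by
    have hpos : 0 < ∫ x in u..0, (m x r - m 0 r) := by
      refine intervalIntegral.integral_pos hu0 ((hc.sub continuous_const).continuousOn) ?_ ?_
      · intro x hx
        rcases lt_or_eq_of_le hx.2 with h | h
        · exact (sub_nonneg.2 (hanti0 x h).le)
        · simp [h]
      · exact ⟨u / 2, ⟨by linarith, by linarith⟩, sub_pos.2 (hanti0 _ (by linarith))⟩
    have : (∫ x in u..0, (m x r - m 0 r)) =
        (∫ x in u..0, m x r) - (0 - u) * m 0 r := by
      rw [intervalIntegral.integral_sub (hint u 0) intervalIntegrable_const]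
      simp
    rw [this, hIs] at hpos
    have e : (0 - u) * m 0 r = m 0 r * -u := by ring
    rw [e] at hpos
    linarith
  have hu2a : u < u / 2 := by linarith
  have hu2b : u / 2 ∈ Set.Iio (0:ℝ) := by simp only [Set.mem_Iio]; linarith
  have hu2c : u / 2 ∈ Set.Icc u (0:ℝ) := by
    simp only [Set.mem_Icc]; constructor <;> linarith
  have hhigh : -s < m u r * (-u) := by
    have hpos : 0 < ∫ x in u..0, (m u r - m x r) := by
      refine intervalIntegral.integral_pos hu0 ((continuous_const.sub hc).continuousOn) ?_ ?_
      · intro x hx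
        rcases lt_or_eq_of_le hx.2 with h | h
        · exact sub_nonneg.2 (hmanti r hr hu0 h hx.1).le
        · have := hanti0 u hu0
          rw [h]; linarith
      · exact ⟨u / 2, hu2c, sub_pos.2 (hmanti r hr hu0 hu2b hu2a)⟩
    have : (∫ x in u..0, (m u r - m x r)) =
        (0 - u) * m u r - (∫ x in u..0, m x r) := by
      rw [intervalIntegral.integral_sub intervalIntegrable_const (hint u 0)]
      simp
    rw [this, hIs] at hpos
    have e : (0 - u) * m u r = m u r * -u := by ring
    rw [e] at hpos
    linarith
  have hc1 : m 0 r < s / u := by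
    rw [lt_div_iff_of_neg hu0]
    nlinarith
  have hc2 : s / u < m u r := by
    rw [div_lt_iff_of_neg hu0]
    nlinarith
  -- intermediate value
  obtain ⟨t, ht, hmt⟩ : ∃ t ∈ Set.Ioo u 0, m t r = s / u :=
    intermediate_value_Ioo' hu0.le hc.continuousOn ⟨hc1, hc2⟩
  have hsu : s / (s / u) = u := by
    field_simp
    rw [mul_comm, mul_div_assoc, div_self hs.ne, mul_one]
  refine ⟨t, ⟨ht.1, ht.2, ?_, ?_, habs⟩, ?_⟩
  · rw [hmt, hsu, hMu]
  · rw [abs_of_neg ht.2, abs_of_neg hu0]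
    linarith [ht.1]
  · rintro t' ⟨h1, h2, h3, -, -⟩
    have hmt' : m t' r = s / u := by
      have h4 : Minv r (M r (s / m t' r)) = s / m t' r := (hinv r hr).1 _
      rw [← h3, ← hu] at h4
      have hm' : m t' r ≠ 0 := (hmpos t' r hr).ne'
      rw [h4]
      field_simp
      rw [div_self hs.ne]
    exact (hmanti r hr).injOn h2 ht.2 (by rw [hmt', hmt])
end
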